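/- In the binary classification setting, with e^B the majority-vote error rate and e^a the average error rate of N classifiers on m examples, one has the lower bound e^B ≥ (N/⌊N/2+1⌋)·e^a − (N/⌊N/2+1⌋ − 1), and hence e^B ≥ e^a − 1/2 when N/⌊N/2+1⌋ ≥ 1. -/

import Mathlib

open Finset

/-!
Summing the error indicators example by example: on an example where the majority vote is wrong
at most all `N` classifiers err, and on one where it is right at most `N - (⌊N/2⌋ + 1)` do.
With `k = ⌊N/2⌋ + 1` this gives `N m e^a ≤ k m e^B + (N - k) m`, which is the first bound.
The second follows from it because `N/k < 2`, `0 ≤ e^B` and `e^a ≤ 1`.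
-/

theorem sum_sum_le_of_le_one {α β : Type*} [Fintype α] [Fintype β]
    (ε : α → β → ℕ) (hε : ∀ i j, ε i j ≤ 1) (t : ℕ) :
    ∑ i, ∑ j, ε i j ≤ #(univ.filter fun i => t ≤ ∑ j, ε i j) * Fintype.card β +
      (Fintype.card α - #(univ.filter fun i => t ≤ ∑ j, ε i j)) * (t - 1) := by
  rw [← sum_filter_add_sum_filter_not univ (fun i => t ≤ ∑ j, ε i j)]
  gcongr ?_ + ?_
  · refine (sum_le_card_nsmul _ _ _ fun i _ => ?_).trans_eq (smul_eq_mul ..)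
    simpa using sum_le_card_nsmul univ (ε i) 1 fun j _ => hε i j
  · rw [← card_univ, ← card_filter_add_card_filter_not (s := univ) (fun i => t ≤ ∑ j, ε i j),
      Nat.add_sub_cancel_left]
    refine (sum_le_card_nsmul _ _ _ fun i hi => ?_).trans_eq (smul_eq_mul ..)
    have := (mem_filter.1 hi).2
    omega

theorem sub_half_le_of_mul_sub_le {r x y : ℝ} (hr : r < 2) (hx : 0 ≤ x) (hy : y ≤ 1)
    (h : r * y - (r - 1) ≤ x) : y - 1 / 2 ≤ x := by
  rcases le_or_gt y (1 / 2) with hy' | hy'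
  · linarith
  · nlinarith

/-- In binary classification, the majority-vote error rate `e^B` satisfies the lower bound
`e^B ≥ (N/⌊N/2+1⌋) e^a − (N/⌊N/2+1⌋ − 1)`, and hence `e^B ≥ e^a − 1/2` when
`N/⌊N/2+1⌋ ≥ 1`. -/
theorem majority_vote_error_lower_bound
    (m N : ℕ) (hm : 0 < m) (hN : 0 < N)
    (ε : Fin m → Fin N → ℕ) (hε : ∀ i j, ε i j ≤ 1)
    (eB ea : ℝ)
    (heB : eB = ((Finset.univ.filter
        (fun i : Fin m => (N - 1) / 2 + 1 ≤ ∑ j, ε i j)).card : ℝ) / m)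
    (hea : ea = (∑ i, ∑ j, (ε i j : ℝ)) / (N * m)) :
    eB ≥ ((N : ℝ) / (N / 2 + 1 : ℕ)) * ea - ((N : ℝ) / (N / 2 + 1 : ℕ) - 1) ∧
    ((1 : ℝ) ≤ (N : ℝ) / (N / 2 + 1 : ℕ) → eB ≥ ea - 1 / 2) := by
  have hcount := sum_sum_le_of_le_one ε hε ((N - 1) / 2 + 1)
  set k := N / 2 + 1
  set c := #(univ.filter fun i : Fin m => (N - 1) / 2 + 1 ≤ ∑ j, ε i j)
  have hkN : k ≤ N := by omega
  have hcm : c ≤ m := (card_le_univ _).trans_eq (Fintype.card_fin m)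
  rw [show (N - 1) / 2 + 1 - 1 = N - k by omega, Fintype.card_fin, Fintype.card_fin] at hcount
  have hsum : ∑ i, ∑ j, (ε i j : ℝ) ≤ c * k + (N - k) * m := by
    have := (Nat.cast_le (α := ℝ)).2 hcount
    push_cast [Nat.cast_sub hcm, Nat.cast_sub hkN] at this
    linarith
  have hmR : (0 : ℝ) < m := by exact_mod_cast hm
  have hNR : (0 : ℝ) < N := by exact_mod_cast hN
  have hkR : (0 : ℝ) < k := by positivity
  have hfirst : eB ≥ (N / k) * ea - (N / k - 1) := by
    rw [heB, hea, ge_iff_le, ← sub_nonneg]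
    have : (c : ℝ) / m - (N / k * ((∑ i, ∑ j, (ε i j : ℝ)) / (N * m)) - (N / k - 1)) =
        (c * k + (N - k) * m - ∑ i, ∑ j, (ε i j : ℝ)) / (k * m) := by
      field_simp
      ring
    rw [this]
    exact div_nonneg (by linarith) (by positivity)
  refine ⟨hfirst, fun _ => sub_half_le_of_mul_sub_le ?_ ?_ ?_ hfirst⟩
  · rw [div_lt_iff₀ hkR]
    exact_mod_cast (show N < 2 * k by omega)
  · rw [heB]; positivity
  · rw [hea, div_le_one (by positivity)]
    have : (c : ℝ) ≤ m := by exact_mod_cast hcm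
    nlinarith
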